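/- Let 1 ≤ p < ∞, r ∈ ℕ, n ∈ ℕ with n ≥ 2, and let [a,b] ⊂ ℝ. Let X_n consist of the uniformly spaced nodes x_j = a + j(b−a)/n, j = 0, 1, …, n, and let f ∈ L^p([a,b]) be bounded and measurable. Then there exists a constant c_3 > 0, depending only on r and p (not on f, n, δ), such that for every δ with 0 < δ ≤ (b−a)/(nr): ‖f̃_{δ,r} − f‖_{ℓ_p(X_n)} ≤ c_3 · τ_r(f; δ + (b−a)/(rn))_p. -/

import Mathlib

open MeasureTheory Real Filter Finset

noncomputable section

/-- `p`-th root of the integral of `|f|^p` over `[a,b]` (the `L^p([a,b])`-norm of a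
pointwise defined function). -/
def LpNormI (a b p : ℝ) (f : ℝ → ℝ) : ℝ :=
  (∫ x in Set.Icc a b, |f x| ^ p) ^ (1 / p)

/-- Membership in `L^p([a,b])` (functions taken pointwise). -/
def MemLpI (a b p : ℝ) (f : ℝ → ℝ) : Prop :=
  Measurable f ∧ IntegrableOn (fun x : ℝ => |f x| ^ p) (Set.Icc a b)

/-- `r`-th finite difference `Δ_h^r(f,x)`. -/
def fdiff (r : ℕ) (h : ℝ) (f : ℝ → ℝ) (x : ℝ) : ℝ :=
  ∑ k ∈ Finset.range (r + 1), (r.choose k : ℝ) * (-1 : ℝ) ^ (r - k) * f (x + k * h)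

/-- `r`-th modulus of smoothness `ω_r(f,δ)_p` on `[a,b]`. -/
def modulusI (a b : ℝ) (r : ℕ) (f : ℝ → ℝ) (δ p : ℝ) : ℝ :=
  sSup {y : ℝ | ∃ h : ℝ, 0 < h ∧ h ≤ δ ∧
    y = (∫ x in Set.Icc a (b - (r : ℝ) * h), |fdiff r h f x| ^ p) ^ (1 / p)}

/-- Steklov average `f̃_{δ,r}` of Sendov–Popov on `[a,b]`. -/
def steklovI (a b : ℝ) (r : ℕ) (δ : ℝ) (f : ℝ → ℝ) (x : ℝ) : ℝ :=
  (-δ) ^ (-(r : ℤ)) *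
    ∫ t in (Set.univ.pi fun _ : Fin r => Set.Icc (0 : ℝ) δ),
      ∑ m ∈ Finset.Icc 1 r,
        (-1 : ℝ) ^ (r - m + 1) * (r.choose (r - m) : ℝ) *
          f (x + (m : ℝ) * ((∑ i, t i) / (r : ℝ) - δ * (x - a) / (b - a)))

/-- Discrete `ℓ_p(X_n)` seminorm attached to nodes `X 0, …, X n` in `[a,b]`. -/
def ellpX (a b p : ℝ) (n : ℕ) (X : ℕ → ℝ) (f : ℝ → ℝ) : ℝ :=
  (((b - a) / n) * ∑ k ∈ Finset.range (n + 1), |f (X k)| ^ p) ^ (1 / p)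

/-- Sobolev space `W^s_p([a,b])`: here `D` plays the role of the `s`-th derivative
`g^{(s)}`. -/
def SobolevI (a b : ℝ) (s : ℕ) (p : ℝ) (g D : ℝ → ℝ) : Prop :=
  MemLpI a b p g ∧ MemLpI a b p D ∧
    (∀ i : ℕ, i < s - 1 → DifferentiableOn ℝ (iteratedDeriv i g) (Set.Icc a b)) ∧
    ∀ x ∈ Set.Icc a b,
      iteratedDeriv (s - 1) g x = iteratedDeriv (s - 1) g a + ∫ t in a..x, D t

/-- Semi-discrete modulus of smoothness `Ω̃_{r,s}` on `[a,b]`: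
`‖f̃_{δ,r} − f‖_{ℓ_p(X_n)} + ω_s(f, η)_p`. -/
def SemiDiscreteModI (a b : ℝ) (r s : ℕ) (p δ η : ℝ) (n : ℕ) (X : ℕ → ℝ)
    (f : ℝ → ℝ) : ℝ :=
  ellpX a b p n X (fun x => steklovI a b r δ f x - f x) + modulusI a b s f η p

/-- Semi-discrete K-functional `K_s(f, X_n)_p` on `[a,b]`. -/
def KfunI (a b : ℝ) (s : ℕ) (p : ℝ) (n : ℕ) (X : ℕ → ℝ) (f : ℝ → ℝ) : ℝ :=
  sInf {y : ℝ | ∃ g D : ℝ → ℝ, SobolevI a b s p g D ∧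
    y = ellpX a b p n X (fun x => f x - g x) + LpNormI a b p (fun x => f x - g x) +
      (n : ℝ) ^ (-(s : ℤ)) * LpNormI a b p D}

/-- Local modulus of smoothness `ω_k(f, x; δ)` on `[a,b]`. -/
def localModI (a b : ℝ) (k : ℕ) (f : ℝ → ℝ) (x δ : ℝ) : ℝ :=
  sSup {y : ℝ | ∃ t h : ℝ, 0 ≤ h ∧
    t ∈ Set.Icc (x - k * δ / 2) (x + k * δ / 2) ∩ Set.Icc a b ∧
    t + k * h ∈ Set.Icc (x - k * δ / 2) (x + k * δ / 2) ∩ Set.Icc a b ∧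
    y = |fdiff k h f t|}

/-- Averaged modulus of smoothness (τ-modulus) `τ_k(f; δ)_p` on `[a,b]`. -/
def tauI (a b : ℝ) (k : ℕ) (f : ℝ → ℝ) (δ p : ℝ) : ℝ :=
  (∫ x in Set.Icc a b, |localModI a b k f x δ| ^ p) ^ (1 / p)

/-- Bernstein polynomial of `f` on `[0,1]`. -/
def bern (n : ℕ) (f : ℝ → ℝ) (x : ℝ) : ℝ :=
  ∑ k ∈ Finset.range (n + 1), f ((k : ℝ) / n) * (n.choose k : ℝ) * x ^ k * (1 - x) ^ (n - k)


/-! ### Auxiliary lemmas -/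

section Aux

lemma fdiff_zero' (r : ℕ) (hr : 1 ≤ r) (f : ℝ → ℝ) (x : ℝ) : fdiff r 0 f x = 0 := by
  have h0 : ((1:ℝ) + (-1)) ^ r = ∑ k ∈ Finset.range (r + 1),
      (1:ℝ) ^ k * (-1) ^ (r - k) * (r.choose k : ℝ) := add_pow 1 (-1) r
  simp only [one_pow, one_mul] at h0
  unfold fdiff
  have h2 : ∑ k ∈ Finset.range (r + 1), (r.choose k : ℝ) * (-1 : ℝ) ^ (r - k) * f (x + k * 0)
      = (∑ k ∈ Finset.range (r + 1), (-1 : ℝ) ^ (r - k) * (r.choose k : ℝ)) * f x := by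
    rw [Finset.sum_mul]
    apply Finset.sum_congr rfl
    intro k _; ring_nf
  rw [h2, ← h0, add_neg_cancel, zero_pow (by omega), zero_mul]

lemma fdiff_reflect (r : ℕ) (h : ℝ) (f : ℝ → ℝ) (x : ℝ) :
    fdiff r (-h) f x = (-1 : ℝ) ^ r * fdiff r h f (x - r * h) := by
  unfold fdiff
  rw [Finset.mul_sum, ← Finset.sum_range_reflect]
  apply Finset.sum_congr rfl
  intro k hk
  simp only [Finset.mem_range] at hk
  have hk' : k ≤ r := by omega
  have e1 : r + 1 - 1 - k = r - k := by omega
  have e2 : r - (r - k) = k := by omega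
  rw [e1, e2, Nat.choose_symm hk']
  have e3 : ((r - k : ℕ) : ℝ) = (r : ℝ) - (k : ℝ) := by
    push_cast [hk']; ring
  rw [e3]
  have e4 : x + ((r : ℝ) - k) * -h = x - r * h + k * h := by ring
  rw [e4]
  have e5 : (-1 : ℝ) ^ r * (-1) ^ (r - k) = (-1) ^ k := by
    rw [← pow_add]
    have : r + (r - k) = 2 * (r - k) + k := by omega
    rw [this, pow_add, pow_mul]
    norm_num
  rw [← e5]; ring

lemma abs_fdiff_le (a b : ℝ) (k : ℕ) (f : ℝ → ℝ) (M : ℝ)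
    (hM : ∀ x ∈ Set.Icc a b, |f x| ≤ M) (t h : ℝ) (hh : 0 ≤ h)
    (ht : t ∈ Set.Icc a b) (hth : t + k * h ∈ Set.Icc a b) :
    |fdiff k h f t| ≤ 2 ^ k * M := by
  unfold fdiff
  have step2 : ∀ i ∈ Finset.range (k + 1),
      |(k.choose i : ℝ) * (-1 : ℝ) ^ (k - i) * f (t + i * h)| ≤ (k.choose i : ℝ) * M := by
    intro i hi
    simp only [Finset.mem_range] at hi
    rw [abs_mul, abs_mul, abs_pow, abs_neg, abs_one, one_pow, mul_one, Nat.abs_cast]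
    have hik : (i : ℝ) ≤ (k : ℝ) := by exact_mod_cast Nat.lt_succ_iff.mp hi
    have hi0 : (0:ℝ) ≤ (i:ℝ) := Nat.cast_nonneg i
    have harg : t + i * h ∈ Set.Icc a b := by
      constructor
      · nlinarith [ht.1]
      · nlinarith [hth.2]
    exact mul_le_mul_of_nonneg_left (hM _ harg) (Nat.cast_nonneg _)
  calc |∑ i ∈ Finset.range (k + 1), (k.choose i : ℝ) * (-1 : ℝ) ^ (k - i) * f (t + i * h)|
      ≤ ∑ i ∈ Finset.range (k + 1), |(k.choose i : ℝ) * (-1 : ℝ) ^ (k - i) * f (t + i * h)| :=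
        Finset.abs_sum_le_sum_abs _ _
    _ ≤ ∑ i ∈ Finset.range (k + 1), (k.choose i : ℝ) * M := Finset.sum_le_sum step2
    _ = 2 ^ k * M := by
        rw [← Finset.sum_mul, ← Nat.cast_sum, Nat.sum_range_choose]
        push_cast; ring

lemma bddAbove_localSet (a b : ℝ) (k : ℕ) (f : ℝ → ℝ) (M : ℝ)
    (hM : ∀ x ∈ Set.Icc a b, |f x| ≤ M) (x δ : ℝ) :
    BddAbove {y : ℝ | ∃ t h : ℝ, 0 ≤ h ∧
      t ∈ Set.Icc (x - k * δ / 2) (x + k * δ / 2) ∩ Set.Icc a b ∧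
      t + k * h ∈ Set.Icc (x - k * δ / 2) (x + k * δ / 2) ∩ Set.Icc a b ∧
      y = |fdiff k h f t|} := by
  refine ⟨2 ^ k * M, ?_⟩
  rintro y ⟨t, h, hh, ⟨_, ht⟩, ⟨_, hth⟩, rfl⟩
  exact abs_fdiff_le a b k f M hM t h hh ht hth

lemma le_localModI (a b : ℝ) (k : ℕ) (f : ℝ → ℝ) (M : ℝ)
    (hM : ∀ x ∈ Set.Icc a b, |f x| ≤ M) (x δ : ℝ) (t h : ℝ) (hh : 0 ≤ h)
    (ht : t ∈ Set.Icc (x - k * δ / 2) (x + k * δ / 2) ∩ Set.Icc a b)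
    (hth : t + k * h ∈ Set.Icc (x - k * δ / 2) (x + k * δ / 2) ∩ Set.Icc a b) :
    |fdiff k h f t| ≤ localModI a b k f x δ :=
  le_csSup (bddAbove_localSet a b k f M hM x δ) ⟨t, h, hh, ht, hth, rfl⟩

lemma localModI_nonneg (a b : ℝ) (k : ℕ) (hk : 1 ≤ k) (f : ℝ → ℝ) (M : ℝ)
    (hM : ∀ x ∈ Set.Icc a b, |f x| ≤ M) (x δ : ℝ) (hδ : 0 ≤ δ)
    (hx : x ∈ Set.Icc a b) : 0 ≤ localModI a b k f x δ := by
  have hk' : (1:ℝ) ≤ (k:ℝ) := by exact_mod_cast hk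
  have hxw : x ∈ Set.Icc (x - k * δ / 2) (x + k * δ / 2) ∩ Set.Icc a b := by
    refine ⟨⟨by nlinarith, by nlinarith⟩, hx⟩
  have := le_localModI a b k f M hM x δ x 0 le_rfl hxw (by simpa using hxw)
  rwa [fdiff_zero' k hk f x, abs_zero] at this

lemma localModI_le_bound (a b : ℝ) (k : ℕ) (hk : 1 ≤ k) (f : ℝ → ℝ) (M : ℝ)
    (hM : ∀ x ∈ Set.Icc a b, |f x| ≤ M) (x δ : ℝ) (hδ : 0 ≤ δ)
    (hx : x ∈ Set.Icc a b) : localModI a b k f x δ ≤ 2 ^ k * M := by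
  have hk' : (1:ℝ) ≤ (k:ℝ) := by exact_mod_cast hk
  apply csSup_le
  · refine ⟨|fdiff k 0 f x|, x, 0, le_rfl, ⟨⟨by nlinarith, by nlinarith⟩, hx⟩, ?_, rfl⟩
    simp only [mul_zero, add_zero]
    exact ⟨⟨by nlinarith, by nlinarith⟩, hx⟩
  · rintro y ⟨t, h, hh, ⟨_, ht⟩, ⟨_, hth⟩, rfl⟩
    exact abs_fdiff_le a b k f M hM t h hh ht hth

lemma abs_fdiff_le_localModI (a b : ℝ) (k : ℕ) (f : ℝ → ℝ) (M : ℝ)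
    (hM : ∀ x ∈ Set.Icc a b, |f x| ≤ M) (x δ : ℝ) (z θ : ℝ)
    (hz : z ∈ Set.Icc (x - k * δ / 2) (x + k * δ / 2) ∩ Set.Icc a b)
    (hzθ : z + k * θ ∈ Set.Icc (x - k * δ / 2) (x + k * δ / 2) ∩ Set.Icc a b) :
    |fdiff k θ f z| ≤ localModI a b k f x δ := by
  rcases le_or_gt 0 θ with hθ | hθ
  · exact le_localModI a b k f M hM x δ z θ hθ hz hzθ
  · have key : fdiff k θ f z = (-1 : ℝ) ^ k * fdiff k (-θ) f (z + k * θ) := by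
      have h2 := fdiff_reflect k (-θ) f z
      rw [neg_neg] at h2
      rw [h2]
      ring_nf
    rw [key, abs_mul, abs_pow, abs_neg, abs_one, one_pow, one_mul]
    have harg : (z + k * θ) + k * (-θ) = z := by ring
    exact le_localModI a b k f M hM x δ (z + k * θ) (-θ) (by linarith) hzθ
      (by rw [harg]; exact hz)

lemma countable_right_adj (U : Set ℝ) :
    Set.Countable {x : ℝ | x ∉ U ∧ ∃ ε > 0, Set.Ioo x (x + ε) ⊆ U} := by
  set C := {x : ℝ | x ∉ U ∧ ∃ ε > 0, Set.Ioo x (x + ε) ⊆ U} with hC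
  have hpick : ∀ x ∈ C, ∃ q : ℚ, (q : ℝ) ∈ U ∧ x < q ∧ Set.Ioo x (q : ℝ) ⊆ U := by
    rintro x ⟨hxU, ε, hε, hsub⟩
    obtain ⟨q, hq1, hq2⟩ := exists_rat_btwn (show x < x + ε by linarith)
    exact ⟨q, hsub ⟨hq1, hq2⟩, hq1, fun y hy => hsub ⟨hy.1, lt_trans hy.2 hq2⟩⟩
  choose! φ hφU hφlt hφsub using hpick
  have hinj : Set.InjOn φ C := by
    intro x hx y hy hxy
    by_contra hne
    rcases lt_or_gt_of_ne hne with hlt | hlt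
    · have : y ∈ Set.Ioo x ((φ x : ℚ) : ℝ) := ⟨hlt, by rw [hxy]; exact_mod_cast hφlt y hy⟩
      exact hy.1 (hφsub x hx this)
    · have : x ∈ Set.Ioo y ((φ y : ℚ) : ℝ) := ⟨hlt, by rw [← hxy]; exact_mod_cast hφlt x hx⟩
      exact hx.1 (hφsub y hy this)
  exact Set.countable_of_injective_of_countable_image hinj (Set.to_countable _)

lemma countable_left_adj (U : Set ℝ) :
    Set.Countable {x : ℝ | x ∉ U ∧ ∃ ε > 0, Set.Ioo (x - ε) x ⊆ U} := by
  set C := {x : ℝ | x ∉ U ∧ ∃ ε > 0, Set.Ioo (x - ε) x ⊆ U} with hC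
  have hpick : ∀ x ∈ C, ∃ q : ℚ, (q : ℝ) < x ∧ Set.Ioo ((q : ℝ)) x ⊆ U := by
    rintro x ⟨hxU, ε, hε, hsub⟩
    obtain ⟨q, hq1, hq2⟩ := exists_rat_btwn (show x - ε < x by linarith)
    exact ⟨q, hq2, fun y hy => hsub ⟨lt_trans hq1 hy.1, hy.2⟩⟩
  choose! φ hφlt hφsub using hpick
  have hinj : Set.InjOn φ C := by
    intro x hx y hy hxy
    by_contra hne
    rcases lt_or_gt_of_ne hne with hlt | hlt
    · have : x ∈ Set.Ioo ((φ y : ℚ) : ℝ) y := ⟨by rw [← hxy]; exact_mod_cast hφlt x hx, hlt⟩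
      exact hx.1 (hφsub y hy this)
    · have : y ∈ Set.Ioo ((φ x : ℚ) : ℝ) x := ⟨by rw [hxy]; exact_mod_cast hφlt y hy, hlt⟩
      exact hy.1 (hφsub x hx this)
  exact Set.countable_of_injective_of_countable_image hinj (Set.to_countable _)

lemma measurableSet_union_Icc (S : Set (ℝ × ℝ)) (hS : ∀ q ∈ S, q.1 < q.2) :
    MeasurableSet (⋃ q ∈ S, Set.Icc q.1 q.2) := by
  set V := ⋃ q ∈ S, Set.Icc q.1 q.2 with hV
  have hsplit : V = interior V ∪ (V \ interior V) := by
    rw [Set.union_diff_cancel interior_subset]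
  have hcnt : (V \ interior V).Countable := by
    apply Set.Countable.mono ?_ ((countable_right_adj (interior V)).union
      (countable_left_adj (interior V)))
    rintro x ⟨hxV, hxI⟩
    obtain ⟨q, hqS, hq1, hq2⟩ : ∃ q ∈ S, q.1 ≤ x ∧ x ≤ q.2 := by
      simp only [hV, Set.mem_iUnion] at hxV
      obtain ⟨q, hqS, hq⟩ := hxV
      exact ⟨q, hqS, hq.1, hq.2⟩
    have hIccV : Set.Icc q.1 q.2 ⊆ V := by
      intro y hy; simp only [hV, Set.mem_iUnion]; exact ⟨q, hqS, hy⟩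
    have hIooR : Set.Ioo x q.2 ⊆ interior V :=
      interior_maximal (fun z hz => hIccV ⟨le_trans hq1 (le_of_lt hz.1), le_of_lt hz.2⟩) isOpen_Ioo
    have hIooL : Set.Ioo q.1 x ⊆ interior V :=
      interior_maximal (fun z hz => hIccV ⟨le_of_lt hz.1, le_trans (le_of_lt hz.2) hq2⟩) isOpen_Ioo
    rcases lt_or_ge x q.2 with hlt | hle
    · left
      refine ⟨hxI, q.2 - x, by linarith, ?_⟩
      intro y hy
      exact hIooR ⟨hy.1, by linarith [hy.2]⟩
    · right
      have hq1x : q.1 < x := lt_of_lt_of_le (hS q hqS) hle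
      refine ⟨hxI, x - q.1, by linarith, ?_⟩
      intro y hy
      exact hIooL ⟨by linarith [hy.1], hy.2⟩
  rw [hsplit]
  exact MeasurableSet.union isOpen_interior.measurableSet hcnt.measurableSet

lemma measurable_fdiff (k : ℕ) (h : ℝ) (f : ℝ → ℝ) (hf : Measurable f) :
    Measurable (fun x => fdiff k h f x) := by
  unfold fdiff
  apply Finset.measurable_sum
  intro i _
  exact (hf.comp (measurable_id.add_const _)).const_mul _

lemma exists_measurable_localMod (a b : ℝ) (hab : a < b) (k : ℕ) (hk : 1 ≤ k)
    (f : ℝ → ℝ) (hf : Measurable f) (M : ℝ) (hM : ∀ x ∈ Set.Icc a b, |f x| ≤ M)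
    (δ : ℝ) (hδ : 0 < δ) :
    ∃ g : ℝ → ℝ, Measurable g ∧ ∀ x ∈ Set.Icc a b, g x = localModI a b k f x δ := by
  classical
  have hkR1 : (1:ℝ) ≤ (k:ℝ) := by exact_mod_cast hk
  have hkpos : (0:ℝ) < (k:ℝ) := by linarith
  have hc0 : 0 < (k:ℝ) * δ / 2 := by positivity
  set g : ℝ → ℝ := fun x => if x ∈ Set.Icc a b then localModI a b k f x δ else 0 with hg
  refine ⟨g, ?_, fun x hx => by simp only [hg]; rw [if_pos hx]⟩
  apply measurable_of_Ioi
  intro lam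
  set E : Set (ℝ × ℝ) := {q | 0 ≤ q.2 ∧ q.2 < δ ∧ a ≤ q.1 ∧ q.1 + (k:ℝ) * q.2 ≤ b ∧
    lam < |fdiff k q.2 f q.1|} with hE
  set S : Set (ℝ × ℝ) :=
    (fun q : ℝ × ℝ => (q.1 + (k:ℝ) * q.2 - (k:ℝ) * δ / 2, q.1 + (k:ℝ) * δ / 2)) '' E with hS
  set V : Set ℝ := ⋃ q ∈ S, Set.Icc q.1 q.2 with hV
  set D : Set ℝ := {x : ℝ | a ≤ x - (k:ℝ) * δ / 2 ∧ x + (k:ℝ) * δ / 2 ≤ b ∧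
    lam < |fdiff k δ f (x - (k:ℝ) * δ / 2)|} with hD
  have hVmeas : MeasurableSet V := by
    apply measurableSet_union_Icc
    rintro q ⟨p, hpE, rfl⟩
    have : (k:ℝ) * p.2 < (k:ℝ) * δ := mul_lt_mul_of_pos_left hpE.2.1 hkpos
    simp only []
    linarith
  have hDmeas : MeasurableSet D := by
    apply MeasurableSet.inter
    · exact measurableSet_le measurable_const (measurable_id.sub_const _)
    apply MeasurableSet.inter
    · exact measurableSet_le (measurable_id.add_const _) measurable_const
    · have : Measurable fun x : ℝ => |fdiff k δ f (x - (k:ℝ) * δ / 2)| :=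
        ((measurable_fdiff k δ f hf).comp (measurable_id.sub_const _)).abs
      exact measurableSet_lt measurable_const this
  rcases lt_or_ge lam 0 with hlam | hlam
  · have : g ⁻¹' Set.Ioi lam = Set.univ := by
      ext x
      simp only [Set.mem_preimage, Set.mem_Ioi, Set.mem_univ, iff_true, hg]
      by_cases hx : x ∈ Set.Icc a b
      · rw [if_pos hx]
        exact lt_of_lt_of_le hlam (localModI_nonneg a b k hk f M hM x δ hδ.le hx)
      · rw [if_neg hx]; exact hlam
    rw [this]; exact MeasurableSet.univ
  · have key : g ⁻¹' Set.Ioi lam = Set.Icc a b ∩ (V ∪ D) := by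
      ext x
      simp only [Set.mem_preimage, Set.mem_Ioi, Set.mem_inter_iff, hg]
      by_cases hx : x ∈ Set.Icc a b
      swap
      · rw [if_neg hx]
        simp only [hx, false_and, iff_false, not_lt]
        exact hlam
      rw [if_pos hx]
      simp only [hx, true_and]
      constructor
      · intro hlt
        have hne : {y : ℝ | ∃ t h : ℝ, 0 ≤ h ∧
            t ∈ Set.Icc (x - k * δ / 2) (x + k * δ / 2) ∩ Set.Icc a b ∧
            t + k * h ∈ Set.Icc (x - k * δ / 2) (x + k * δ / 2) ∩ Set.Icc a b ∧
            y = |fdiff k h f t|}.Nonempty := by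
          refine ⟨|fdiff k 0 f x|, x, 0, le_rfl, ⟨⟨by linarith, by linarith⟩, hx⟩, ?_, rfl⟩
          simp only [mul_zero, add_zero]
          exact ⟨⟨by linarith, by linarith⟩, hx⟩
        obtain ⟨y, hy, hlamy⟩ := exists_lt_of_lt_csSup hne hlt
        obtain ⟨t, h, hh, ⟨⟨ht1, ht2⟩, hta, htb⟩, ⟨⟨hs1, hs2⟩, hsa, hsb⟩, rfl⟩ := hy
        have hhδ : h ≤ δ := by
          have hkh : (k:ℝ) * h ≤ (k:ℝ) * δ := by linarith
          exact le_of_mul_le_mul_left hkh hkpos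
        rcases lt_or_eq_of_le hhδ with hhlt | hheq
        · left
          simp only [hV, hS, Set.biUnion_image, Set.mem_iUnion]
          refine ⟨(t, h), ⟨hh, hhlt, hta, hsb, hlamy⟩, ?_, ?_⟩
          · simp only []; linarith
          · simp only []; linarith
        · right
          have h1 : t ≤ x - (k:ℝ) * δ / 2 := by
            rw [hheq] at hs2; linarith
          have hteq : t = x - (k:ℝ) * δ / 2 := le_antisymm h1 ht1
          refine ⟨by rw [← hteq]; exact hta, ?_, ?_⟩
          · rw [hheq] at hsb; rw [hteq] at hsb; linarith
          · rw [← hteq, ← hheq]; exact hlamy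
      · intro hVD
        have hbdd := bddAbove_localSet a b k f M hM x δ
        rcases hVD with hxV | hxD
        · simp only [hV, hS, Set.biUnion_image, Set.mem_iUnion] at hxV
          obtain ⟨q, ⟨hq0, hqδ, hqa, hqb, hqlam⟩, hx12⟩ := hxV
          obtain ⟨hx1, hx2⟩ := hx12
          have hkq : 0 ≤ (k:ℝ) * q.2 := by positivity
          have hmem : |fdiff k q.2 f q.1| ∈ {y : ℝ | ∃ t h : ℝ, 0 ≤ h ∧
              t ∈ Set.Icc (x - k * δ / 2) (x + k * δ / 2) ∩ Set.Icc a b ∧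
              t + k * h ∈ Set.Icc (x - k * δ / 2) (x + k * δ / 2) ∩ Set.Icc a b ∧
              y = |fdiff k h f t|} := by
            refine ⟨q.1, q.2, hq0, ⟨⟨by linarith, by linarith⟩, hqa, by linarith⟩,
              ⟨⟨by linarith, by linarith⟩, by linarith, hqb⟩, rfl⟩
          exact lt_of_lt_of_le hqlam (le_csSup hbdd hmem)
        · obtain ⟨hd1, hd2, hd3⟩ := hxD
          have hmem : |fdiff k δ f (x - (k:ℝ) * δ / 2)| ∈ {y : ℝ | ∃ t h : ℝ, 0 ≤ h ∧
              t ∈ Set.Icc (x - k * δ / 2) (x + k * δ / 2) ∩ Set.Icc a b ∧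
              t + k * h ∈ Set.Icc (x - k * δ / 2) (x + k * δ / 2) ∩ Set.Icc a b ∧
              y = |fdiff k h f t|} := by
            refine ⟨x - (k:ℝ) * δ / 2, δ, hδ.le, ⟨⟨le_rfl, by linarith⟩, hd1, by linarith [hx.2]⟩,
              ⟨⟨by linarith, by linarith⟩, by linarith, by linarith⟩, rfl⟩
          exact lt_of_lt_of_le hd3 (le_csSup hbdd hmem)
    rw [key]
    exact (measurableSet_Icc).inter (hVmeas.union hDmeas)

-- membership of evaluation points
lemma steklov_arg_mem (a b : ℝ) (hab : a < b) (r : ℕ) (hr : 1 ≤ r) (δ : ℝ) (hδ : 0 < δ)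
    (hrδ : (r:ℝ) * δ ≤ b - a) (z : ℝ) (hz : z ∈ Set.Icc a b) (m : ℕ) (hm : m ≤ r)
    (θ : ℝ) (hθ1 : -(δ * (z - a) / (b - a)) ≤ θ) (hθ2 : θ ≤ δ - δ * (z - a) / (b - a)) :
    z + (m:ℝ) * θ ∈ Set.Icc a b := by
  have hba : (0:ℝ) < b - a := by linarith
  set A : ℝ := δ * (z - a) / (b - a) with hA
  have hAba : A * (b - a) = δ * (z - a) := div_mul_cancel₀ _ (ne_of_gt hba)
  have hA0 : 0 ≤ A := by
    apply div_nonneg _ hba.le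
    nlinarith [hz.1]
  have hAδ : A ≤ δ := by
    rw [div_le_iff₀ hba]
    nlinarith [hz.2]
  have hm' : (m:ℝ) ≤ (r:ℝ) := by exact_mod_cast hm
  have hm0 : (0:ℝ) ≤ (m:ℝ) := Nat.cast_nonneg m
  have hr0 : (0:ℝ) ≤ (r:ℝ) := Nat.cast_nonneg r
  constructor
  · -- a ≤ z + m θ : mθ ≥ -rA and z - rA ≥ a
    have h1 : (m:ℝ) * θ ≥ -((r:ℝ) * A) := by nlinarith
    have h2 : (r:ℝ) * A ≤ z - a := by nlinarith [hz.1]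
    linarith
  · have h1 : (m:ℝ) * θ ≤ (r:ℝ) * (δ - A) := by nlinarith
    have h2 : (r:ℝ) * (δ - A) ≤ b - z := by nlinarith [hz.2]
    linarith

lemma steklov_sub_bound (a b : ℝ) (hab : a < b) (r : ℕ) (hr : 1 ≤ r)
    (f : ℝ → ℝ) (hf : Measurable f) (M : ℝ) (hM : ∀ x ∈ Set.Icc a b, |f x| ≤ M)
    (δ : ℝ) (hδ : 0 < δ) (hrδ : (r:ℝ) * δ ≤ b - a) (z : ℝ) (hz : z ∈ Set.Icc a b)
    (C : ℝ)
    (hC : ∀ θ : ℝ, -(δ * (z - a) / (b - a)) ≤ θ → θ ≤ δ - δ * (z - a) / (b - a) →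
      |fdiff r θ f z| ≤ C) :
    |steklovI a b r δ f z - f z| ≤ C := by
  have hba : (0:ℝ) < b - a := by linarith
  have hrpos : (0:ℝ) < (r:ℝ) := by exact_mod_cast Nat.lt_of_lt_of_le Nat.zero_lt_one hr
  set A : ℝ := δ * (z - a) / (b - a) with hA
  set cube : Set (Fin r → ℝ) := Set.univ.pi fun _ : Fin r => Set.Icc (0 : ℝ) δ with hcube
  set Θ : (Fin r → ℝ) → ℝ := fun t => (∑ i, t i) / (r : ℝ) - A with hΘ
  have hcubeMeas : MeasurableSet cube := MeasurableSet.univ_pi fun _ => measurableSet_Icc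
  have hvol : volume cube = (ENNReal.ofReal δ) ^ r := by
    rw [hcube, volume_pi_pi]
    simp [Real.volume_Icc, hδ.le]
  have hvolfin : volume cube < ⊤ := by
    rw [hvol]
    exact ENNReal.pow_lt_top ENNReal.ofReal_lt_top
  have hvolReal : (volume cube).toReal = δ ^ r := by
    rw [hvol, ENNReal.toReal_pow, ENNReal.toReal_ofReal hδ.le]
  -- Θ bounds
  have hΘmem : ∀ t ∈ cube, -A ≤ Θ t ∧ Θ t ≤ δ - A := by
    intro t ht
    have ht' : ∀ i, t i ∈ Set.Icc (0:ℝ) δ := fun i => ht i (Set.mem_univ i)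
    have hsum0 : 0 ≤ ∑ i, t i := Finset.sum_nonneg fun i _ => (ht' i).1
    have hsumδ : ∑ i, t i ≤ (r:ℝ) * δ := by
      calc ∑ i, t i ≤ ∑ _i : Fin r, δ := Finset.sum_le_sum fun i _ => (ht' i).2
        _ = (r:ℝ) * δ := by simp [Finset.sum_const, nsmul_eq_mul]
    constructor
    · rw [hΘ]
      have : 0 ≤ (∑ i, t i) / (r:ℝ) := div_nonneg hsum0 hrpos.le
      simp only []
      linarith
    · rw [hΘ]
      have : (∑ i, t i) / (r:ℝ) ≤ δ := by
        rw [div_le_iff₀ hrpos]; linarith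
      simp only []
      linarith
  -- measurability of terms
  have hmeasΘ : Measurable Θ := by
    apply Measurable.sub
    · exact (Finset.measurable_sum Finset.univ fun i _ => measurable_pi_apply i).div_const _
    · exact measurable_const
  have hterm_meas : ∀ m : ℕ, Measurable (fun t : Fin r → ℝ => f (z + (m:ℝ) * Θ t)) :=
    fun m => hf.comp ((hmeasΘ.const_mul _).const_add _)
  have hterm_int : ∀ m : ℕ, m ≤ r →
      IntegrableOn (fun t : Fin r → ℝ => f (z + (m:ℝ) * Θ t)) cube := by
    intro m hm
    apply Measure.integrableOn_of_bounded (M := M) hvolfin.ne ((hterm_meas m).aestronglyMeasurable)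
    apply (ae_restrict_iff' hcubeMeas).mpr
    apply Filter.Eventually.of_forall
    intro t ht
    obtain ⟨h1, h2⟩ := hΘmem t ht
    have harg := steklov_arg_mem a b hab r hr δ hδ hrδ z hz m hm (Θ t) h1 h2
    simpa using hM _ harg
  have hfd_int : IntegrableOn (fun t : Fin r → ℝ => fdiff r (Θ t) f z) cube := by
    unfold fdiff
    apply MeasureTheory.integrable_finset_sum
    intro m hm
    simp only [Finset.mem_range] at hm
    exact ((hterm_int m (by omega)).const_mul _)
  -- pointwise identity
  have hid : ∀ t : Fin r → ℝ,
      (∑ m ∈ Finset.Icc 1 r, (-1 : ℝ) ^ (r - m + 1) * (r.choose (r - m) : ℝ)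
        * f (z + (m : ℝ) * Θ t))
      = (-1:ℝ) ^ r * f z - fdiff r (Θ t) f z := by
    intro t
    have hins : Finset.range (r + 1) = insert 0 (Finset.Icc 1 r) := by
      ext m
      simp only [Finset.mem_range, Finset.mem_insert, Finset.mem_Icc]
      omega
    have hfd : fdiff r (Θ t) f z = (-1:ℝ)^r * f z +
        ∑ m ∈ Finset.Icc 1 r, (r.choose m : ℝ) * (-1:ℝ)^(r-m) * f (z + m * Θ t) := by
      unfold fdiff
      rw [hins, Finset.sum_insert (by simp)]
      simp
    have hterm : ∀ m ∈ Finset.Icc 1 r,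
        (-1 : ℝ) ^ (r - m + 1) * (r.choose (r - m) : ℝ) * f (z + (m : ℝ) * Θ t)
        = -((r.choose m : ℝ) * (-1:ℝ)^(r-m) * f (z + m * Θ t)) := by
      intro m hm
      simp only [Finset.mem_Icc] at hm
      rw [Nat.choose_symm hm.2, pow_succ]
      ring
    rw [Finset.sum_congr rfl hterm, Finset.sum_neg_distrib, hfd]
    ring
  -- rewrite the integral
  have hsplit : (∫ t in cube, ∑ m ∈ Finset.Icc 1 r,
        (-1 : ℝ) ^ (r - m + 1) * (r.choose (r - m) : ℝ) * f (z + (m : ℝ) * Θ t))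
      = (-1:ℝ)^r * f z * δ^r - ∫ t in cube, fdiff r (Θ t) f z := by
    rw [MeasureTheory.setIntegral_congr_fun hcubeMeas (fun t _ => hid t)]
    rw [MeasureTheory.integral_sub ((integrableOn_const_iff (C := (-1:ℝ)^r * f z)).mpr (Or.inr hvolfin)) hfd_int]
    rw [MeasureTheory.setIntegral_const, measureReal_def, hvolReal]
    congr 1
    rw [smul_eq_mul]
    ring
  -- steklov formula
  have hδr : (δ:ℝ)^r ≠ 0 := pow_ne_zero _ (ne_of_gt hδ)
  have hw : (-δ : ℝ) ^ (-(r:ℤ)) = ((-1:ℝ)^r * δ^r)⁻¹ := by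
    rw [zpow_neg, zpow_natCast, neg_pow]
  have hform : steklovI a b r δ f z - f z
      = -(((-1:ℝ)^r * δ^r)⁻¹ * ∫ t in cube, fdiff r (Θ t) f z) := by
    unfold steklovI
    rw [← hA, ← hcube]
    have : (fun t : Fin r → ℝ => ∑ m ∈ Finset.Icc 1 r,
        (-1 : ℝ) ^ (r - m + 1) * (r.choose (r - m) : ℝ)
          * f (z + (m : ℝ) * ((∑ i, t i) / (r : ℝ) - A)))
        = fun t => ∑ m ∈ Finset.Icc 1 r,
        (-1 : ℝ) ^ (r - m + 1) * (r.choose (r - m) : ℝ) * f (z + (m : ℝ) * Θ t) := rfl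
    rw [this, hsplit, hw]
    have hne : ((-1:ℝ)^r * δ^r) ≠ 0 := by
      apply mul_ne_zero _ hδr
      exact pow_ne_zero _ (by norm_num)
    field_simp
    ring
  rw [hform, abs_neg, abs_mul, abs_inv, abs_mul, abs_pow, abs_pow, abs_neg, abs_one,
    one_pow, one_mul, abs_of_pos hδ]
  have hIbound : |∫ t in cube, fdiff r (Θ t) f z| ≤ C * δ^r := by
    have hbnd : ∀ t ∈ cube, ‖fdiff r (Θ t) f z‖ ≤ C := by
      intro t ht
      obtain ⟨h1, h2⟩ := hΘmem t ht
      rw [Real.norm_eq_abs]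
      exact hC (Θ t) h1 h2
    have hres := MeasureTheory.norm_setIntegral_le_of_norm_le_const (μ := volume) (s := cube)
      (f := fun t => fdiff r (Θ t) f z) hvolfin hbnd
    rwa [measureReal_def, hvolReal, Real.norm_eq_abs] at hres
  calc (δ^r)⁻¹ * |∫ t in cube, fdiff r (Θ t) f z| ≤ (δ^r)⁻¹ * (C * δ^r) := by
        apply mul_le_mul_of_nonneg_left hIbound
        positivity
    _ = C := by field_simp

end Aux

set_option maxHeartbeats 1000000 in
/-- Theorem 4.11. -/
theorem stmt15
    (p : ℝ) (hp : 1 ≤ p) (r : ℕ) (hr : 1 ≤ r) :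
    ∃ c3 : ℝ, 0 < c3 ∧ ∀ a b : ℝ, a < b → ∀ n : ℕ, 2 ≤ n →
      ∀ f : ℝ → ℝ, MemLpI a b p f → (∃ M : ℝ, ∀ x ∈ Set.Icc a b, |f x| ≤ M) →
      ∀ δ : ℝ, 0 < δ → δ ≤ (b - a) / (n * r) →
        ellpX a b p n (fun j => a + j * (b - a) / n)
            (fun x => steklovI a b r δ f x - f x) ≤
          c3 * tauI a b r f (δ + (b - a) / (r * n)) p := by
  refine ⟨4, by norm_num, ?_⟩
  intro a b hab n hn f hfLp hfbd δ hδ hδle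
  obtain ⟨M, hM⟩ := hfbd
  have hf : Measurable f := hfLp.1
  have hp0 : (0:ℝ) < p := lt_of_lt_of_le one_pos hp
  have hrR : (1:ℝ) ≤ (r:ℝ) := by exact_mod_cast hr
  have hrpos : (0:ℝ) < (r:ℝ) := by linarith
  have hnR : (2:ℝ) ≤ (n:ℝ) := by exact_mod_cast hn
  have hnpos : (0:ℝ) < (n:ℝ) := by linarith
  have hba : (0:ℝ) < b - a := by linarith
  set H : ℝ := (b - a) / n with hH
  have hHpos : 0 < H := by positivity
  have hHN : (n:ℝ) * H = b - a := by rw [hH]; field_simp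
  have hrδH : (r:ℝ) * δ ≤ H := by
    have h1 := mul_le_mul_of_nonneg_left hδle hrpos.le
    have h2 : (r:ℝ) * ((b - a) / (n * r)) = H := by
      rw [hH]; field_simp
    linarith [h1, h2.ge]
  have hHba : H ≤ b - a := by nlinarith
  have hrδba : (r:ℝ) * δ ≤ b - a := le_trans hrδH hHba
  set δ' : ℝ := δ + (b - a) / (r * n) with hδ'def
  have hδ'pos : 0 < δ' := by positivity
  have hrδ' : (r:ℝ) * δ' = r * δ + H := by
    rw [hδ'def, hH]; field_simp
  set q : ℝ := (r:ℝ) * δ / n with hq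
  have hq0 : 0 ≤ q := by positivity
  have hqN : q * n = (r:ℝ) * δ := by rw [hq]; field_simp
  have hqH2 : q ≤ H / 2 := by nlinarith [hqN, hrδH, mul_le_mul_of_nonneg_left hnR hq0]
  -- nodes and intervals
  set X : ℕ → ℝ := fun j => a + (j:ℝ) * (b - a) / (n:ℝ) with hX
  set c : ℕ → ℝ := fun j => a + (j:ℝ) * H + (r:ℝ) * δ / 2 - q * (j:ℝ) with hc
  set l : ℕ → ℝ := fun j => max a (c j - H / 4) with hl
  set u : ℕ → ℝ := fun j => l j + H / 4 with hu
  have hXval : ∀ j : ℕ, X j = a + (j:ℝ) * H := by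
    intro j; rw [hX, hH]; ring
  have hc' : ∀ j : ℕ, c j = a + (j:ℝ) * H + (r:ℝ) * δ / 2 - q * (j:ℝ) := fun j => rfl
  have hl' : ∀ j : ℕ, l j = max a (c j - H / 4) := fun j => rfl
  have hu' : ∀ j : ℕ, u j = l j + H / 4 := fun j => rfl
  clear_value H δ' q X c l u
  have hcj_mem : ∀ j : ℕ, j ≤ n → a ≤ c j ∧ c j ≤ b := by
    intro j hj
    have hJn : (j:ℝ) ≤ (n:ℝ) := by exact_mod_cast hj
    have hJ0 : (0:ℝ) ≤ (j:ℝ) := Nat.cast_nonneg j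
    have hHq : 0 ≤ H - q := by linarith
    constructor
    · rw [hc' j]
      nlinarith [mul_nonneg hJ0 hHq, mul_pos hrpos hδ]
    · rw [hc' j]
      nlinarith [mul_nonneg (show (0:ℝ) ≤ (n:ℝ) - (j:ℝ) by linarith) hHq,
        mul_nonneg hq0 hnpos.le, hqN]
  have hlu : ∀ j : ℕ, j ≤ n → a ≤ l j ∧ l j ≤ c j ∧ c j - H / 4 ≤ l j ∧ u j ≤ b := by
    intro j hj
    have h1 : a ≤ l j := by rw [hl' j]; exact le_max_left _ _
    have h2 : l j ≤ c j := by
      rw [hl' j]; exact max_le (hcj_mem j hj).1 (by linarith)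
    have h3 : c j - H / 4 ≤ l j := by rw [hl' j]; exact le_max_right _ _
    have h4 : u j ≤ b := by
      have hab4 : a ≤ b - H / 4 := by
        nlinarith [mul_nonneg (show (0:ℝ) ≤ (n:ℝ) - 1 by linarith) hHpos.le, hHN]
      have : l j ≤ b - H / 4 := by
        rw [hl' j]
        exact max_le hab4 (by linarith [(hcj_mem j hj).2])
      rw [hu' j]; linarith
    exact ⟨h1, h2, h3, h4⟩
  have hKsub : ∀ j : ℕ, j ≤ n → Set.Ioo (l j) (u j) ⊆ Set.Icc a b := by
    intro j hj x hx
    obtain ⟨h1, _, _, h4⟩ := hlu j hj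
    exact ⟨le_of_lt (lt_of_le_of_lt h1 hx.1), le_of_lt (lt_of_lt_of_le hx.2 h4)⟩
  -- measurable version of the local modulus
  obtain ⟨g, hgmeas, hgx⟩ := exists_measurable_localMod a b hab r hr f hf M hM δ' hδ'pos
  set G : ℝ → ℝ := fun x => |g x| ^ p with hG
  have hGmeas : Measurable G := by rw [hG]; fun_prop
  have hGnonneg : ∀ x, 0 ≤ G x := fun x => Real.rpow_nonneg (abs_nonneg _) p
  have hGbd : ∀ x ∈ Set.Icc a b, G x ≤ (2 ^ r * M) ^ p := by
    intro x hx
    rw [hG]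
    simp only []
    apply Real.rpow_le_rpow (abs_nonneg _) ?_ hp0.le
    rw [hgx x hx, abs_of_nonneg (localModI_nonneg a b r hr f M hM x δ' hδ'pos.le hx)]
    exact localModI_le_bound a b r hr f M hM x δ' hδ'pos.le hx
  have hIccfin : volume (Set.Icc a b) < ⊤ := by
    rw [Real.volume_Icc]; exact ENNReal.ofReal_lt_top
  have hGint : IntegrableOn G (Set.Icc a b) := by
    apply Measure.integrableOn_of_bounded (M := (2 ^ r * M) ^ p) hIccfin.ne
      hGmeas.aestronglyMeasurable
    apply (ae_restrict_iff' measurableSet_Icc).mpr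
    apply Filter.Eventually.of_forall
    intro x hx
    rw [Real.norm_eq_abs, abs_of_nonneg (hGnonneg x)]
    exact hGbd x hx
  set T : ℝ := ∫ x in Set.Icc a b, G x with hT
  have hT0 : 0 ≤ T := setIntegral_nonneg measurableSet_Icc fun x _ => hGnonneg x
  have htau : tauI a b r f δ' p = T ^ (1 / p) := by
    unfold tauI
    congr 1
    apply setIntegral_congr_fun measurableSet_Icc
    intro x hx
    simp only [hG]
    rw [hgx x hx]
  -- the key node bound
  set F : ℝ → ℝ := fun x => steklovI a b r δ f x - f x with hF
  have hnode : ∀ j : ℕ, j ≤ n → ∀ x ∈ Set.Ioo (l j) (u j),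
      |F (X j)| ≤ localModI a b r f x δ' := by
    intro j hj x hx
    have hJn : (j:ℝ) ≤ (n:ℝ) := by exact_mod_cast hj
    have hJ0 : (0:ℝ) ≤ (j:ℝ) := Nat.cast_nonneg j
    have hqJ0 : 0 ≤ q * (j:ℝ) := mul_nonneg hq0 hJ0
    have hqJrδ : q * (j:ℝ) ≤ (r:ℝ) * δ := by
      nlinarith [mul_le_mul_of_nonneg_left hJn hq0, hqN]
    have hXj_mem : X j ∈ Set.Icc a b := by
      rw [hXval]
      constructor
      · nlinarith [mul_nonneg hJ0 hHpos.le]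
      · nlinarith [mul_nonneg (show (0:ℝ) ≤ (n:ℝ) - (j:ℝ) by linarith) hHpos.le, hHN]
    obtain ⟨hl1, hl2, hl3, hu4⟩ := hlu j hj
    have hxc1 : c j - H / 2 ≤ x := by
      have := hx.1
      linarith
    have hxc2 : x ≤ c j + H / 2 := by
      have h2 := hx.2
      rw [hu' j] at h2
      linarith
    have hFval : F (X j) = steklovI a b r δ f (X j) - f (X j) := rfl
    rw [hFval]
    apply steklov_sub_bound a b hab r hr f hf M hM δ hδ hrδba (X j) hXj_mem
    intro θ hθ1 hθ2
    have hA : (r:ℝ) * (δ * (X j - a) / (b - a)) = q * (j:ℝ) := by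
      rw [hXval, hq]
      field_simp
      linear_combination (j:ℝ) * hHN
    have hθ1' : -(q * (j:ℝ)) ≤ (r:ℝ) * θ := by
      have := mul_le_mul_of_nonneg_left hθ1 hrpos.le
      rw [mul_neg, hA] at this
      linarith
    have hθ2' : (r:ℝ) * θ ≤ (r:ℝ) * δ - q * (j:ℝ) := by
      have := mul_le_mul_of_nonneg_left hθ2 hrpos.le
      rw [mul_sub, hA] at this
      linarith
    have hcval : c j = X j + (r:ℝ) * δ / 2 - q * (j:ℝ) := by
      rw [hc' j, hXval]
    have h5 : (r:ℝ) * δ' / 2 = ((r:ℝ) * δ + H) / 2 := by rw [hrδ']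
    apply abs_fdiff_le_localModI a b r f M hM x δ' (X j) θ
    · refine ⟨Set.mem_Icc.mpr ⟨?_, ?_⟩, hXj_mem⟩
      · rw [h5]
        linarith [hxc2, hcval]
      · rw [h5]
        linarith [hxc1, hcval]
    · refine ⟨Set.mem_Icc.mpr ⟨?_, ?_⟩,
        steklov_arg_mem a b hab r hr δ hδ hrδba (X j) hXj_mem r le_rfl θ hθ1 hθ2⟩
      · rw [h5]
        linarith [hxc2, hcval]
      · rw [h5]
        linarith [hxc1, hcval]
  -- per-interval integral bound
  have hvolK : ∀ j : ℕ, (volume (Set.Ioo (l j) (u j))).toReal = H / 4 := by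
    intro j
    rw [Real.volume_Ioo, hu' j]
    rw [show l j + H / 4 - l j = H / 4 by ring, ENNReal.toReal_ofReal (by positivity)]
  have hjint : ∀ j : ℕ, j ≤ n → |F (X j)| ^ p * (H / 4) ≤ ∫ x in Set.Ioo (l j) (u j), G x := by
    intro j hj
    have hint : IntegrableOn G (Set.Ioo (l j) (u j)) := hGint.mono_set (hKsub j hj)
    have hconst : IntegrableOn (fun _ : ℝ => |F (X j)| ^ p) (Set.Ioo (l j) (u j)) := by
      apply (integrableOn_const_iff (C := |F (X j)| ^ p)).mpr
      right
      rw [Real.volume_Ioo]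
      exact ENNReal.ofReal_lt_top
    have hmono := setIntegral_mono_on hconst hint measurableSet_Ioo ?_
    · rw [setIntegral_const, measureReal_def, hvolK j, smul_eq_mul, mul_comm] at hmono
      exact hmono
    · intro x hx
      have hb := hnode j hj x hx
      have hxI := hKsub j hj hx
      have hω0 := localModI_nonneg a b r hr f M hM x δ' hδ'pos.le hxI
      simp only [hG]
      rw [hgx x hxI, abs_of_nonneg hω0]
      exact Real.rpow_le_rpow (abs_nonneg _) hb hp0.le
  -- disjointness
  have hdisj : (↑(Finset.range (n + 1)) : Set ℕ).Pairwise
      (Function.onFun Disjoint fun j => Set.Ioo (l j) (u j)) := by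
    have hkey : ∀ i j : ℕ, i < j → j ≤ n → u i ≤ l j := by
      intro i j hij hjn
      have hJI : (1:ℝ) ≤ (j:ℝ) - (i:ℝ) := by
        have : (i:ℝ) + 1 ≤ (j:ℝ) := by exact_mod_cast hij
        linarith
      have hci := (hcj_mem i (le_trans (le_of_lt hij) hjn)).1
      have hli : l i ≤ c i := by
        rw [hl' i]; exact max_le hci (by linarith)
      have hcc : c i + H / 2 ≤ c j := by
        rw [hc' i, hc' j]
        nlinarith [mul_le_mul_of_nonneg_right hJI (show (0:ℝ) ≤ H - q by linarith)]
      have hlj : c j - H / 4 ≤ l j := by rw [hl' j]; exact le_max_right _ _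
      rw [hu' i]
      linarith
    intro i hi j hj hij
    rcases lt_or_gt_of_ne hij with hlt | hlt
    · have hjn : j ≤ n := by
        simp only [Finset.coe_range, Set.mem_Iio] at hj; omega
      have := hkey i j hlt hjn
      rw [Function.onFun, Set.disjoint_left]
      intro x h1 h2
      exact absurd (lt_of_lt_of_le h1.2 (le_trans this h2.1.le)) (lt_irrefl x)
    · have hin : i ≤ n := by
        simp only [Finset.coe_range, Set.mem_Iio] at hi; omega
      have := hkey j i hlt hin
      rw [Function.onFun, Set.disjoint_left]
      intro x h1 h2
      exact absurd (lt_of_lt_of_le h2.2 (le_trans this h1.1.le)) (lt_irrefl x)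
  have hsum : ∑ j ∈ Finset.range (n + 1), ∫ x in Set.Ioo (l j) (u j), G x ≤ T := by
    have hjmem : ∀ j ∈ Finset.range (n + 1), j ≤ n := by
      intro j hj; simp only [Finset.mem_range] at hj; omega
    rw [← integral_biUnion_finset (Finset.range (n + 1))
      (fun j _ => measurableSet_Ioo) hdisj
      (fun j hj => hGint.mono_set (hKsub j (hjmem j hj)))]
    apply setIntegral_mono_set hGint
      (Filter.Eventually.of_forall fun x => hGnonneg x)
      (HasSubset.Subset.eventuallyLE ?_)
    intro x hx
    simp only [Set.mem_iUnion] at hx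
    obtain ⟨j, hj, hxj⟩ := hx
    exact hKsub j (hjmem j hj) hxj
  -- final chain
  have key : (b - a) / (n:ℝ) * ∑ j ∈ Finset.range (n + 1), |F (X j)| ^ p ≤ 4 * T := by
    have h4 : (b - a) / (n:ℝ) * ∑ j ∈ Finset.range (n + 1), |F (X j)| ^ p
        = 4 * ∑ j ∈ Finset.range (n + 1), |F (X j)| ^ p * (H / 4) := by
      rw [Finset.mul_sum, Finset.mul_sum]
      apply Finset.sum_congr rfl
      intro j _
      rw [← hH]
      ring
    rw [h4]
    have h5 : ∑ j ∈ Finset.range (n + 1), |F (X j)| ^ p * (H / 4)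
        ≤ ∑ j ∈ Finset.range (n + 1), ∫ x in Set.Ioo (l j) (u j), G x := by
      apply Finset.sum_le_sum
      intro j hj
      simp only [Finset.mem_range] at hj
      exact hjint j (by omega)
    linarith [hsum]
  have hLHS0 : 0 ≤ (b - a) / (n:ℝ) * ∑ j ∈ Finset.range (n + 1), |F (X j)| ^ p := by
    apply mul_nonneg (by positivity)
    apply Finset.sum_nonneg
    intro j _
    exact Real.rpow_nonneg (abs_nonneg _) p
  have hfinal : ((b - a) / (n:ℝ) * ∑ j ∈ Finset.range (n + 1), |F (X j)| ^ p) ^ (1 / p)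
      ≤ 4 * T ^ (1 / p) := by
    calc ((b - a) / (n:ℝ) * ∑ j ∈ Finset.range (n + 1), |F (X j)| ^ p) ^ (1 / p)
        ≤ (4 * T) ^ (1 / p) := Real.rpow_le_rpow hLHS0 key (by positivity)
      _ = 4 ^ (1 / p) * T ^ (1 / p) := Real.mul_rpow (by norm_num) hT0
      _ ≤ 4 * T ^ (1 / p) := by
          apply mul_le_mul_of_nonneg_right ?_ (Real.rpow_nonneg hT0 _)
          calc (4:ℝ) ^ (1 / p) ≤ 4 ^ (1:ℝ) := by
                apply Real.rpow_le_rpow_of_exponent_le (by norm_num)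
                rw [div_le_one hp0]
                exact hp
            _ = 4 := Real.rpow_one 4
  rw [htau] at *
  unfold ellpX
  exact hfinal
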